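/- arXiv:1103.1035 — 2 statements merged into one kernel-verified Lean document; each statement's English description precedes it below -/
import Mathlib

section
/- Let g be a DG Lie algebra over a field K of characteristic 0, ω a Maurer-Cartan element, and a_ω := Coker(d_ω : g^{-2} → g^{-1}). Then the bracket [α₁, α₂]_ω := [d_ω(α₁), α₂] descends to a well-defined Lie bracket on a_ω, making a_ω a Lie algebra. In particular, for α ∈ g^{-1} and α' ∈ d_ω(g^{-2}), both [α, α']_ω and [α', α]_ω lie in d_ω(g^{-2}). -/
/-!
The Maurer–Cartan equation makes `d_ω` a square-zero derivation of degree one, since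
`d_ω² = ad(dω + ½[ω,ω])` and `[ω,[ω,x]] = ½[[ω,ω],x]`. Consequently `d_ω` kills `B = d_ω(g⁻²)`, and
`d_ω[d_ω α, β] = [d_ω α, d_ω β]` for `α ∈ g⁻¹`, so `[d_ω α, B] ⊆ B`: the bracket descends to `g⁻¹/B`.
Antisymmetry modulo `B` is the Leibniz rule `d_ω[α₁,α₂] = [d_ω α₁,α₂] + [d_ω α₂,α₁]`, and the Jacobi
identity even holds on the nose, because `ad(d_ω α₁)` is a derivation of degree zero.
-/

open scoped TensorProduct

/-- A (ℤ-graded) DG Lie algebra over a field `K` of characteristic `0`. -/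
structure DGLA (K : Type) [Field K] : Type 1 where
  L : Type
  [acg : AddCommGroup L]
  [mod : Module K L]
  grading : ℤ → Submodule K L
  isInternal : DirectSum.IsInternal grading
  d : L →ₗ[K] L
  d_sq : ∀ x, d (d x) = 0
  d_deg : ∀ (i : ℤ), ∀ x ∈ grading i, d x ∈ grading (i + 1)
  bracket : L →ₗ[K] L →ₗ[K] L
  bracket_deg : ∀ (i j : ℤ), ∀ x ∈ grading i, ∀ y ∈ grading j, bracket x y ∈ grading (i + j)
  bracket_antisymm : ∀ (i j : ℤ), ∀ x ∈ grading i, ∀ y ∈ grading j,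
    bracket x y = -(((Int.negOnePow (i * j) : ℤˣ) : ℤ) • bracket y x)
  bracket_jacobi : ∀ (i j k : ℤ), ∀ x ∈ grading i, ∀ y ∈ grading j, ∀ z ∈ grading k,
    ((Int.negOnePow (i * k) : ℤˣ) : ℤ) • bracket x (bracket y z)
      + ((Int.negOnePow (j * i) : ℤˣ) : ℤ) • bracket y (bracket z x)
      + ((Int.negOnePow (k * j) : ℤˣ) : ℤ) • bracket z (bracket x y) = 0
  d_leibniz : ∀ (i : ℤ), ∀ x ∈ grading i, ∀ y : L,
    d (bracket x y) = bracket (d x) y + ((Int.negOnePow i : ℤˣ) : ℤ) • bracket x (d y)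

attribute [instance] DGLA.acg DGLA.mod

namespace DGLA

variable {K : Type} [Field K] (g : DGLA K)

/-- The Maurer–Cartan condition: `ω ∈ g¹` and `d ω + ½[ω,ω] = 0`. -/
def IsMC (ω : g.L) : Prop :=
  ω ∈ g.grading 1 ∧ g.d ω + (2 : K)⁻¹ • g.bracket ω ω = 0

/-- The twisted differential `d_ω = d + ad(ω)`. -/
def dMC (ω : g.L) : g.L →ₗ[K] g.L := g.d + g.bracket ω

/-- Lower central series of the underlying graded Lie algebra. -/
def lcs : ℕ → Submodule K g.L
  | 0 => ⊤
  | n + 1 => Submodule.span K {z | ∃ x y, y ∈ lcs n ∧ z = g.bracket x y}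

/-- Nilpotency of a DG Lie algebra. -/
def IsNilpotent : Prop := ∃ n, g.lcs n = ⊥

end DGLA

/-- Truncated exponential `∑_{i<n} fⁱ/i!` of an endomorphism. -/
noncomputable def expN {K : Type} [Field K] {M : Type} [AddCommGroup M] [Module K M]
    (f : M →ₗ[K] M) (n : ℕ) : M →ₗ[K] M :=
  ∑ i ∈ Finset.range n, ((i.factorial : K)⁻¹) • f ^ i

/-- Truncated version of `(exp(f) - 1)/f`, namely `∑_{i<n} fⁱ/(i+1)!`. -/
noncomputable def expN' {K : Type} [Field K] {M : Type} [AddCommGroup M] [Module K M]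
    (f : M →ₗ[K] M) (n : ℕ) : M →ₗ[K] M :=
  ∑ i ∈ Finset.range n, (((i + 1).factorial : K)⁻¹) • f ^ i

/-- The gauge action `Af(exp γ)(ω) = exp(ad γ)(ω) + ((1 - exp(ad γ))/ad γ)(d γ)`,
with exponentials truncated at `n`. -/
noncomputable def DGLA.Af {K : Type} [Field K] (g : DGLA K) (γ : g.L) (n : ℕ) (ω : g.L) :
    g.L :=
  expN (g.bracket γ) n ω - expN' (g.bracket γ) n (g.d γ)

namespace DGLA

variable {K : Type} [Field K] (g : DGLA K)

theorem bracket_mem_grading {i j k : ℤ} (h : i + j = k) {x y : g.L} (hx : x ∈ g.grading i)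
    (hy : y ∈ g.grading j) : g.bracket x y ∈ g.grading k :=
  h ▸ g.bracket_deg i j x hx y hy

theorem bracket_bracket {i j k : ℤ} {z x y : g.L} (hz : z ∈ g.grading k)
    (hx : x ∈ g.grading i) (hy : y ∈ g.grading j) :
    g.bracket z (g.bracket x y) = g.bracket (g.bracket z x) y
      + ((Int.negOnePow (k * i) : ℤˣ) : ℤ) • g.bracket x (g.bracket z y) := by
  have J := g.bracket_jacobi k i j z hz x hx y hy
  rw [g.bracket_antisymm j k y hy z hz,
    g.bracket_antisymm j (k + i) y hy _ (g.bracket_mem_grading rfl hz hx)] at J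
  simp only [map_neg, map_zsmul, smul_neg, mul_add, Int.negOnePow_add, Units.val_mul,
    mul_smul] at J
  rcases Int.even_or_odd i with hi | hi <;> rcases Int.even_or_odd j with hj | hj <;>
    rcases Int.even_or_odd k with hk | hk <;>
    simp [Int.negOnePow_even, Int.negOnePow_odd, hi, hj, hk, parity_simps] at J ⊢ <;>
    first | (linear_combination (norm := abel) J; done) | linear_combination (norm := abel) -J

section Twisted

variable {g} {ω : g.L}

theorem dMC_apply (x : g.L) : g.dMC ω x = g.d x + g.bracket ω x := rfl

theorem dMC_mem_grading (hω : ω ∈ g.grading 1) {i j : ℤ} (h : i + 1 = j) {x : g.L}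
    (hx : x ∈ g.grading i) : g.dMC ω x ∈ g.grading j :=
  h ▸ add_mem (g.d_deg i x hx) (g.bracket_mem_grading (add_comm 1 i) hω hx)

theorem dMC_bracket (hω : ω ∈ g.grading 1) {i j : ℤ} {x y : g.L} (hx : x ∈ g.grading i)
    (hy : y ∈ g.grading j) :
    g.dMC ω (g.bracket x y) =
      g.bracket (g.dMC ω x) y + ((Int.negOnePow i : ℤˣ) : ℤ) • g.bracket x (g.dMC ω y) := by
  simp only [dMC_apply, g.d_leibniz i x hx, g.bracket_bracket hω hx hy, one_mul, map_add,
    LinearMap.add_apply, smul_add]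
  abel

theorem dMC_dMC [CharZero K] (hω : g.IsMC ω) {i : ℤ} {x : g.L} (hx : x ∈ g.grading i) :
    g.dMC ω (g.dMC ω x) = 0 := by
  have hsq : g.bracket (g.bracket ω ω) x = (2 : K) • g.bracket ω (g.bracket ω x) := by
    have h := g.bracket_bracket hω.1 hω.1 hx
    rw [one_mul, Int.negOnePow_one] at h
    simp only [Units.val_neg, Units.val_one, neg_smul, one_smul] at h
    rw [two_smul]
    linear_combination (norm := abel) -h
  calc g.dMC ω (g.dMC ω x) = g.bracket (g.d ω + (2 : K)⁻¹ • g.bracket ω ω) x := by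
        have hd := g.d_leibniz 1 ω hω.1 x
        rw [Int.negOnePow_one] at hd
        simp only [dMC_apply, map_add, g.d_sq, hd, LinearMap.add_apply, LinearMap.smul_apply,
          map_smul, hsq, smul_smul]
        module
    _ = 0 := by rw [hω.2, map_zero, LinearMap.zero_apply]

theorem dMC_bracket_dMC [CharZero K] (hω : g.IsMC ω) {i j : ℤ} {x y : g.L}
    (hx : x ∈ g.grading i) (hy : y ∈ g.grading j) :
    g.dMC ω (g.bracket (g.dMC ω x) y) =
      ((Int.negOnePow (i + 1) : ℤˣ) : ℤ) • g.bracket (g.dMC ω x) (g.dMC ω y) := by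
  rw [dMC_bracket hω.1 (dMC_mem_grading hω.1 rfl hx) hy, dMC_dMC hω hx, map_zero,
    LinearMap.zero_apply, zero_add]

theorem dMC_eq_zero_of_mem_map [CharZero K] (hω : g.IsMC ω) {j : ℤ} {y : g.L}
    (hy : y ∈ (g.grading j).map (g.dMC ω)) : g.dMC ω y = 0 := by
  obtain ⟨β, hβ, rfl⟩ := hy
  exact dMC_dMC hω hβ

theorem bracket_dMC_mem_map [CharZero K] (hω : g.IsMC ω) {i j k : ℤ} (h : i + 1 + j = k)
    {x y : g.L} (hx : x ∈ g.grading i) (hy : y ∈ (g.grading j).map (g.dMC ω)) :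
    g.bracket (g.dMC ω x) y ∈ (g.grading k).map (g.dMC ω) := by
  obtain ⟨β, hβ, rfl⟩ := hy
  refine ⟨((Int.negOnePow (i + 1) : ℤˣ) : ℤ) • g.bracket (g.dMC ω x) β,
    zsmul_mem (g.bracket_mem_grading h (dMC_mem_grading hω.1 rfl hx) hβ) _, ?_⟩
  rw [map_zsmul, dMC_bracket_dMC hω hx hβ, smul_smul, ← Units.val_mul, Int.units_mul_self,
    Units.val_one, one_smul]

theorem bracket_dMC_add_bracket_dMC (hω : ω ∈ g.grading 1) {x y : g.L}
    (hx : x ∈ g.grading (-1)) (hy : y ∈ g.grading (-1)) :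
    g.bracket (g.dMC ω x) y + g.bracket (g.dMC ω y) x = g.dMC ω (g.bracket x y) := by
  rw [dMC_bracket hω hx hy,
    g.bracket_antisymm (-1) 0 x hx _ (dMC_mem_grading hω (neg_add_cancel 1) hy)]
  simp only [mul_zero, Int.negOnePow_zero, Int.negOnePow_neg, Int.negOnePow_one, Units.val_one,
    Units.val_neg, one_smul, neg_smul, neg_neg]

theorem bracket_dMC_bracket_dMC [CharZero K] (hω : g.IsMC ω) {j : ℤ} {x y z : g.L}
    (hx : x ∈ g.grading (-1)) (hy : y ∈ g.grading (-1)) (hz : z ∈ g.grading j) :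
    g.bracket (g.dMC ω x) (g.bracket (g.dMC ω y) z) =
      g.bracket (g.dMC ω (g.bracket (g.dMC ω x) y)) z
        + g.bracket (g.dMC ω y) (g.bracket (g.dMC ω x) z) := by
  rw [dMC_bracket_dMC hω hx hy, g.bracket_bracket (dMC_mem_grading hω.1 (neg_add_cancel 1) hx)
    (dMC_mem_grading hω.1 (neg_add_cancel 1) hy) hz]
  simp only [neg_add_cancel, mul_zero, Int.negOnePow_zero, Units.val_one, one_smul]

end Twisted

end DGLA

/-- the bracket `[α₁,α₂]_ω := [d_ω(α₁), α₂]` descends to a well-defined Lie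
bracket on `a_ω := g⁻¹ / d_ω(g⁻²)`; in particular, for `α ∈ g⁻¹` and `α' ∈ d_ω(g⁻²)`,
both `[α,α']_ω` and `[α',α]_ω` lie in `d_ω(g⁻²)`. -/
theorem stmt6 {K : Type} [Field K] [CharZero K] (g : DGLA K) (ω : g.L) (hω : g.IsMC ω) :
    let B : Submodule K g.L := Submodule.map (g.dMC ω) (g.grading (-2))
    let br : g.L → g.L → g.L := fun a b => g.bracket (g.dMC ω a) b
    (∀ α ∈ g.grading (-1), ∀ α' ∈ B, br α α' ∈ B ∧ br α' α ∈ B) ∧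
    (∀ α₁ ∈ g.grading (-1), ∀ α₂ ∈ g.grading (-1), br α₁ α₂ ∈ g.grading (-1)) ∧
    (∀ α₁ α₁' α₂ α₂' : g.L, α₁ ∈ g.grading (-1) → α₁' ∈ g.grading (-1) →
      α₂ ∈ g.grading (-1) → α₂' ∈ g.grading (-1) →
      α₁ - α₁' ∈ B → α₂ - α₂' ∈ B → br α₁ α₂ - br α₁' α₂' ∈ B) ∧
    (∀ α₁ ∈ g.grading (-1), ∀ α₂ ∈ g.grading (-1), br α₁ α₂ + br α₂ α₁ ∈ B) ∧
    (∀ α₁ ∈ g.grading (-1), ∀ α₂ ∈ g.grading (-1), ∀ α₃ ∈ g.grading (-1),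
      br α₁ (br α₂ α₃) - br (br α₁ α₂) α₃ - br α₂ (br α₁ α₃) ∈ B) := by
  intro B br
  have br_mem : ∀ α ∈ g.grading (-1), ∀ α' ∈ B, br α α' ∈ B := fun _ hα _ hα' =>
    DGLA.bracket_dMC_mem_map hω (by norm_num) hα hα'
  have br_eq_zero : ∀ α' ∈ B, ∀ α, br α' α = 0 := fun _ hα' _ => by
    simp only [br, DGLA.dMC_eq_zero_of_mem_map hω hα', map_zero, LinearMap.zero_apply]
  refine ⟨fun α hα α' hα' => ⟨br_mem α hα α' hα', br_eq_zero α' hα' α ▸ B.zero_mem⟩,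
    fun α₁ h₁ α₂ h₂ => g.bracket_mem_grading (by norm_num)
      (DGLA.dMC_mem_grading hω.1 (neg_add_cancel 1) h₁) h₂, ?_, ?_, ?_⟩
  · intro α₁ α₁' α₂ α₂' h₁ _ _ _ hB₁ hB₂
    have split : br α₁ α₂ - br α₁' α₂' = br α₁ (α₂ - α₂') + br (α₁ - α₁') α₂' := by
      simp only [br, map_sub, LinearMap.sub_apply]
      abel
    rw [split, br_eq_zero _ hB₁, add_zero]
    exact br_mem α₁ h₁ _ hB₂
  · intro α₁ h₁ α₂ h₂
    exact DGLA.bracket_dMC_add_bracket_dMC hω.1 h₁ h₂ ▸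
      Submodule.mem_map_of_mem (g.bracket_mem_grading (by norm_num) h₁ h₂)
  · intro α₁ h₁ α₂ h₂ α₃ h₃
    simp only [br, DGLA.bracket_dMC_bracket_dMC hω h₁ h₂ h₃, add_sub_cancel_left, sub_self]
    exact B.zero_mem
end

section
/- With R, m, n, R̄, g as above (m·n = 0), an element ω̄ ∈ MC(m̄ ⊗ g) lifts to an element of MC(m ⊗ g) if and only if the obstruction class o₂(ω̄) ∈ n ⊗ H²(g) vanishes. -/
open scoped TensorProduct

namespace DGLA

variable {K : Type} [Field K]

/-- The differential extended to `R ⊗ g`. -/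
noncomputable def extD (g : DGLA K) (R : Type) [CommRing R] [Algebra K R] :
    R ⊗[K] g.L →ₗ[K] R ⊗[K] g.L :=
  LinearMap.lTensor R g.d

/-- The Lie bracket extended `R`-bilinearly to `R ⊗ g`:
`[a ⊗ x, b ⊗ y] = (ab) ⊗ [x, y]`. -/
noncomputable def extBr (g : DGLA K) (R : Type) [CommRing R] [Algebra K R] :
    R ⊗[K] g.L →ₗ[K] R ⊗[K] g.L →ₗ[K] R ⊗[K] g.L :=
  TensorProduct.curry
    ((TensorProduct.map (LinearMap.mul' K R) (TensorProduct.lift g.bracket)).comp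
      (TensorProduct.tensorTensorTensorComm K R g.L R g.L).toLinearMap)

/-- The curvature `cur(ω) = d(ω) + ½[ω,ω]` on `R ⊗ g`. -/
noncomputable def curR (g : DGLA K) (R : Type) [CommRing R] [Algebra K R]
    (ω : R ⊗[K] g.L) : R ⊗[K] g.L :=
  g.extD R ω + algebraMap K R ((2 : K)⁻¹) • g.extBr R ω ω

/-- The submodule `I ⊗ gⁱ` of `R ⊗ g`, for an ideal `I ⊆ R`. -/
noncomputable def part (g : DGLA K) (R : Type) [CommRing R] [Algebra K R]
    (I : Ideal R) (i : ℤ) : Submodule R (R ⊗[K] g.L) :=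
  I • ((g.grading i).baseChange R)

/-- A homomorphism of DG Lie algebras. -/
structure Hom (g h : DGLA K) where
  f : g.L →ₗ[K] h.L
  comm_d : ∀ x, f (g.d x) = h.d (f x)
  comm_br : ∀ x y, f (g.bracket x y) = h.bracket (f x) (f y)
  map_grading : ∀ (i : ℤ), ∀ x ∈ g.grading i, f x ∈ h.grading i

/-- `φ : g → h` is a quasi-isomorphism: it induces isomorphisms on all cohomologies. -/
def Hom.IsQuasiIso {g h : DGLA K} (φ : Hom g h) : Prop :=
  ∀ i : ℤ,
    (∀ y ∈ h.grading i, h.d y = 0 → ∃ x ∈ g.grading i, g.d x = 0 ∧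
      ∃ z ∈ h.grading (i - 1), φ.f x - y = h.d z) ∧
    (∀ x ∈ g.grading i, g.d x = 0 → (∃ z ∈ h.grading (i - 1), φ.f x = h.d z) →
      ∃ w ∈ g.grading (i - 1), x = g.d w)

end DGLA

/-!
Since `m·n = 0`, the bracket of `m ⊗ g` with `n ⊗ g` vanishes, so for `ω ∈ m ⊗ g¹` and
`z ∈ n ⊗ g¹` the curvature is affine in the correction: `cur(ω + z) = cur(ω) + d z`.
The lifts of `ω̄` are exactly the `ω - z`, so one of them is Maurer–Cartan iff
`cur(ω) ∈ d(n ⊗ g¹)`. When `n = R` the ring is a field, `ω = 0`, and both sides hold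
trivially.
-/

namespace DGLA

variable {K : Type} [Field K] (g : DGLA K) (R : Type) [CommRing R] [Algebra K R]

lemma extBr_tmul (r r' : R) (x y : g.L) :
    g.extBr R (r ⊗ₜ x) (r' ⊗ₜ y) = (r * r') ⊗ₜ g.bracket x y := rfl

lemma extBr_smul_left (a : R) (t s : R ⊗[K] g.L) :
    g.extBr R (a • t) s = a • g.extBr R t s := by
  induction t using TensorProduct.induction_on with
  | zero => simp
  | tmul r x =>
    induction s using TensorProduct.induction_on with
    | zero => simp
    | tmul r' y =>
      rw [TensorProduct.smul_tmul', extBr_tmul, extBr_tmul, TensorProduct.smul_tmul',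
        smul_eq_mul, smul_eq_mul, mul_assoc]
    | add s₁ s₂ h₁ h₂ => rw [map_add, map_add, h₁, h₂, smul_add]
  | add t₁ t₂ h₁ h₂ =>
    rw [smul_add, map_add, map_add, LinearMap.add_apply, LinearMap.add_apply, h₁, h₂, smul_add]

lemma extBr_smul_right (a : R) (t s : R ⊗[K] g.L) :
    g.extBr R t (a • s) = a • g.extBr R t s := by
  induction t using TensorProduct.induction_on with
  | zero => simp
  | tmul r x =>
    induction s using TensorProduct.induction_on with
    | zero => simp
    | tmul r' y =>
      rw [TensorProduct.smul_tmul', extBr_tmul, extBr_tmul, TensorProduct.smul_tmul',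
        smul_eq_mul, smul_eq_mul, mul_left_comm]
    | add s₁ s₂ h₁ h₂ => rw [smul_add, map_add, map_add, h₁, h₂, smul_add]
  | add t₁ t₂ h₁ h₂ =>
    rw [map_add, LinearMap.add_apply, LinearMap.add_apply, h₁, h₂, smul_add]

variable {g R}

lemma extBr_mem_smul_top_right {J : Ideal R} (x : R ⊗[K] g.L) {y : R ⊗[K] g.L}
    (hy : y ∈ J • (⊤ : Submodule R (R ⊗[K] g.L))) :
    g.extBr R x y ∈ J • (⊤ : Submodule R (R ⊗[K] g.L)) := by
  refine Submodule.smul_induction_on hy (fun b hb s _ => ?_) (fun s t hs ht => ?_)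
  · rw [extBr_smul_right]
    exact Submodule.smul_mem_smul hb Submodule.mem_top
  · rw [map_add]
    exact add_mem hs ht

lemma extBr_mem_mul_smul_top {I J : Ideal R} {x y : R ⊗[K] g.L}
    (hx : x ∈ I • (⊤ : Submodule R (R ⊗[K] g.L)))
    (hy : y ∈ J • (⊤ : Submodule R (R ⊗[K] g.L))) :
    g.extBr R x y ∈ (I * J) • (⊤ : Submodule R (R ⊗[K] g.L)) := by
  rw [← Ideal.smul_eq_mul, Submodule.smul_assoc]
  refine Submodule.smul_induction_on hx (fun a ha t _ => ?_) (fun s t hs ht => ?_)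
  · rw [extBr_smul_left]
    exact Submodule.smul_mem_smul ha (extBr_mem_smul_top_right t hy)
  · rw [map_add, LinearMap.add_apply]
    exact add_mem hs ht

lemma extBr_eq_zero_of_mul_eq_bot {I J : Ideal R} (hIJ : I * J = ⊥) {x y : R ⊗[K] g.L}
    (hx : x ∈ I • (⊤ : Submodule R (R ⊗[K] g.L)))
    (hy : y ∈ J • (⊤ : Submodule R (R ⊗[K] g.L))) : g.extBr R x y = 0 := by
  simpa [hIJ] using extBr_mem_mul_smul_top hx hy

lemma part_le_smul_top (I : Ideal R) (i : ℤ) :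
    g.part R I i ≤ I • (⊤ : Submodule R (R ⊗[K] g.L)) :=
  smul_mono_right I le_top

lemma part_mono {I J : Ideal R} (hJI : J ≤ I) (i : ℤ) : g.part R J i ≤ g.part R I i :=
  Submodule.smul_mono_left hJI

lemma curR_zero : g.curR R 0 = 0 := by
  simp [curR, extD]

lemma curR_add_of_extBr_eq_zero {a b : R ⊗[K] g.L}
    (hab : g.extBr R a b = 0) (hba : g.extBr R b a = 0) (hbb : g.extBr R b b = 0) :
    g.curR R (a + b) = g.curR R a + g.extD R b := by
  simp only [curR, map_add, LinearMap.add_apply, hab, hba, hbb, add_zero]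
  abel

lemma curR_add_of_mul_eq_bot {I J : Ideal R} (hIJ : I * J = ⊥) (hJI : J ≤ I)
    {a b : R ⊗[K] g.L} (ha : a ∈ I • (⊤ : Submodule R (R ⊗[K] g.L)))
    (hb : b ∈ J • (⊤ : Submodule R (R ⊗[K] g.L))) :
    g.curR R (a + b) = g.curR R a + g.extD R b := by
  have hJJ : J * J = ⊥ := eq_bot_iff.mpr (hIJ ▸ Ideal.mul_mono_left hJI)
  exact curR_add_of_extBr_eq_zero (extBr_eq_zero_of_mul_eq_bot hIJ ha hb)
    (extBr_eq_zero_of_mul_eq_bot (mul_comm I J ▸ hIJ) hb ha)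
    (extBr_eq_zero_of_mul_eq_bot hJJ hb hb)

theorem exists_curR_eq_zero_iff_curR_mem_range_extD {I J : Ideal R} (hIJ : I * J = ⊥)
    (hJI : J ≤ I) {ω : R ⊗[K] g.L} (hω : ω ∈ g.part R I 1) :
    (∃ ω' ∈ g.part R I 1, ω - ω' ∈ g.part R J 1 ∧ g.curR R ω' = 0) ↔
      ∃ z ∈ g.part R J 1, g.curR R ω = g.extD R z := by
  constructor
  · rintro ⟨ω', hω', hz, hcur⟩
    refine ⟨ω - ω', hz, ?_⟩
    calc g.curR R ω = g.curR R (ω' + (ω - ω')) := by rw [add_sub_cancel]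
      _ = g.extD R (ω - ω') := by
        rw [curR_add_of_mul_eq_bot hIJ hJI (part_le_smul_top I 1 hω')
          (part_le_smul_top J 1 hz), hcur, zero_add]
  · rintro ⟨z, hz, hdz⟩
    have hzJ : -z ∈ J • (⊤ : Submodule R (R ⊗[K] g.L)) := neg_mem (part_le_smul_top J 1 hz)
    refine ⟨ω - z, sub_mem hω (part_mono hJI 1 hz), by simpa using hz, ?_⟩
    rw [sub_eq_add_neg, curR_add_of_mul_eq_bot hIJ hJI (part_le_smul_top I 1 hω) hzJ, map_neg,
      hdz, add_neg_cancel]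

end DGLA

theorem stmt9_general {K : Type} [Field K] (g : DGLA K)
    (R : Type) [CommRing R] [Algebra K R] [IsLocalRing R]
    (n : Ideal R) (hmn : IsLocalRing.maximalIdeal R * n = ⊥)
    (ω : R ⊗[K] g.L) (hω : ω ∈ g.part R (IsLocalRing.maximalIdeal R) 1) :
    (∃ ω' ∈ g.part R (IsLocalRing.maximalIdeal R) 1,
        ω - ω' ∈ g.part R n 1 ∧ g.curR R ω' = 0) ↔
      ∃ z ∈ g.part R n 1, g.curR R ω = g.extD R z := by
  rcases eq_or_ne n ⊤ with rfl | hn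
  · have hm : IsLocalRing.maximalIdeal R = ⊥ := by rwa [Ideal.mul_top] at hmn
    have hω0 : ω = 0 := by simpa [hm, DGLA.part] using hω
    subst hω0
    exact iff_of_true ⟨0, zero_mem _, by simp, DGLA.curR_zero⟩
      ⟨0, zero_mem _, by simp [DGLA.curR_zero]⟩
  · exact DGLA.exists_curR_eq_zero_iff_curR_mem_range_extD hmn (IsLocalRing.le_maximalIdeal hn) hω

/-- with `m·n = 0`, an MC element `ω̄` of `m̄ ⊗ g` (represented by a lift
`ω ∈ m ⊗ g¹` whose curvature lies in `n ⊗ g`) lifts to an MC element of `m ⊗ g` iff the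
obstruction class `o₂(ω̄) = [cur(ω)] ∈ n ⊗ H²(g)` vanishes, i.e. iff
`cur(ω) ∈ d(n ⊗ g¹)`. -/
theorem stmt9 {K : Type} [Field K] [CharZero K] (g : DGLA K)
    (R : Type) [CommRing R] [Algebra K R] [IsArtinianRing R] [IsLocalRing R]
    (hres : Function.Bijective (algebraMap K (R ⧸ IsLocalRing.maximalIdeal R)))
    (n : Ideal R) (hmn : IsLocalRing.maximalIdeal R * n = ⊥)
    (ω : R ⊗[K] g.L) (hω : ω ∈ g.part R (IsLocalRing.maximalIdeal R) 1)
    (hmc : g.curR R ω ∈ n • (⊤ : Submodule R (R ⊗[K] g.L))) :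
    (∃ ω' ∈ g.part R (IsLocalRing.maximalIdeal R) 1,
        ω - ω' ∈ g.part R n 1 ∧ g.curR R ω' = 0) ↔
      ∃ z ∈ g.part R n 1, g.curR R ω = g.extD R z :=
  stmt9_general g R n hmn ω hω
end
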